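/- For r ∈ (0,1), the conformal factor of the hyperbolic metric on the punctured disc dominates that of the disc: (1/(r(-log r)))^2 > (2/(1-r^2))^2. -/

import Mathlib

theorem stmt9 (r : ℝ) (hr0 : 0 < r) (hr1 : r < 1) :
    (1 / (r * (-Real.log r))) ^ 2 > (2 / (1 - r ^ 2)) ^ 2 := by
  have hlog : Real.log r < 0 := Real.log_neg hr0 hr1
  have hden1 : 0 < r * (-Real.log r) := mul_pos hr0 (by linarith)
  have hden2 : 0 < 1 - r ^ 2 := by nlinarith
  have key : 1 - r ^ 2 + 2 * r * Real.log r > 0 := by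
    set f : ℝ → ℝ := fun x => 1 - x ^ 2 + 2 * x * Real.log x with hf
    have hderiv : ∀ x ∈ Set.Ioo r 1, HasDerivAt f (2 * (1 - x + Real.log x)) x := by
      intro x hx
      have hx0 : 0 < x := lt_trans hr0 hx.1
      have h1 : HasDerivAt (fun x : ℝ => 1 - x ^ 2) (-(2 * x)) x := by
        simpa using ((hasDerivAt_pow 2 x).const_sub 1)
      have h2 : HasDerivAt (fun x : ℝ => 2 * x * Real.log x)
          (2 * Real.log x + 2) x := by
        have := (((hasDerivAt_id x).const_mul 2).mul (Real.hasDerivAt_log hx0.ne'))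
        refine this.congr_deriv ?_
        simp only [id]
        field_simp
      have := h1.add h2
      refine this.congr_deriv ?_
      ring
    have hc : ContinuousOn f (Set.Icc r 1) := by
      apply ContinuousOn.add
      · fun_prop
      · apply ContinuousOn.mul (by fun_prop)
        apply Real.continuousOn_log.mono
        intro x hx
        simp only [Set.mem_compl_iff, Set.mem_singleton_iff]
        have := hx.1
        intro h; rw [h] at this; linarith
    have hanti : StrictAntiOn f (Set.Icc r 1) := by
      apply strictAntiOn_of_deriv_neg (convex_Icc r 1) hc
      intro x hx
      rw [interior_Icc] at hx
      rw [(hderiv x hx).deriv]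
      have hx0 : 0 < x := lt_trans hr0 hx.1
      have hlt : Real.log x < x - 1 :=
        Real.log_lt_sub_one_of_pos hx0 (ne_of_lt hx.2)
      linarith
    have h01 : f 1 < f r := hanti (Set.left_mem_Icc.2 hr1.le) (Set.right_mem_Icc.2 hr1.le) hr1
    have hf1 : f 1 = 0 := by simp [hf]
    rw [hf1] at h01
    simpa [hf] using h01
  have h2 : 2 / (1 - r ^ 2) < 1 / (r * (-Real.log r)) := by
    rw [div_lt_div_iff₀ hden2 hden1]
    nlinarith
  have hpos : 0 ≤ 2 / (1 - r ^ 2) := by positivity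
  exact pow_lt_pow_left₀ h2 hpos (by norm_num)
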